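/- Let U be a vertex Lie algebra over ℂ. Define a bilinear bracket on U by [u,v] = Σ_{n≥0} ((−1)ⁿ/(n+1)!)·D^{n+1}(uₙv), a finite sum. Then (U, [·,·]) is a Lie algebra, namely [v,u] = −[u,v] and [u,[v,w]] − [v,[u,w]] = [[u,v],w] for all u,v,w ∈ U. (This is the transport of the Lie algebra structure of L₋(U) through the isomorphism u ↦ u₋₁.) -/

import Mathlib

/-!
Truncating at a common bound turns every sum into a finite sum over a range. For skew symmetry,
substitute half skew symmetry for `vₙu` and regroup along `n + k = s`; the coefficient of
`D^{s+1}(uₛv)` collapses by `Σ_{i+j=s} (-1)ⁱ/((i+1)! j!) = 1/(s+1)!`.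

For the Jacobi identity, moving `uₘ` past powers of `D` (`uₘ D = D uₘ + m u_{m-1}`) gives
`[u, Dᵏx] = Σₐ (-1)ᵃ k!/(a+k+1)! D^{a+k+1}(uₐx)`, hence the symmetric formula
`[u,[v,w]] = Σ_{a,b} (-1)^{a+b}/(a+b+2)! D^{a+b+2}(uₐ v_b w)`. The commutator formula (half Jacobi
with `k = 0`) turns `[u,[v,w]] - [v,[u,w]]` into a sum over the `(uᵢv)ᵣw`, and
`(Dᵖy)ₘ = (-1)ᵖ m!/(m-p)! y_{m-p}` expands `[[u,v],w]` into the same sum. The only numerical input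
is the beta integral `Σⱼ (-1)ʲ C(n,j)/(a+j+1) = a! n!/(a+n+1)!`.
-/

open scoped BigOperators

noncomputable section

/-- A vertex Lie algebra over `ℂ`. -/
structure VertexLie (U : Type*) [AddCommGroup U] [Module ℂ U] where
  D : U →ₗ[ℂ] U
  mul : ℕ → U →ₗ[ℂ] U →ₗ[ℂ] U
  trunc : ∀ u v : U, ∃ N : ℕ, ∀ n : ℕ, N ≤ n → mul n u v = 0
  dLeft : ∀ (n : ℕ) (u v : U), mul (n + 1) (D u) v = (-((n : ℂ) + 1)) • mul n u v
  dLeftZero : ∀ u v : U, mul 0 (D u) v = 0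
  leibniz : ∀ (n : ℕ) (u v : U), D (mul n u v) = mul n (D u) v + mul n u (D v)
  skew : ∀ (n : ℕ) (u v : U),
    mul n u v =
      -∑ᶠ k : ℕ, (((-1 : ℂ) ^ (n + k)) / (Nat.factorial k : ℂ)) • ((D ^ k) (mul (n + k) v u))
  jacobi : ∀ (k m n : ℕ) (u v w : U),
    ∑ᶠ i : ℕ, ((-1 : ℂ) ^ i * (Nat.choose k i : ℂ)) •
        (mul (m + k - i) u (mul (n + i) v w)
          - ((-1 : ℂ) ^ k) • mul (n + k - i) v (mul (m + i) u w))
      = ∑ᶠ i : ℕ, ((Nat.choose m i : ℂ)) • mul (m + n - i) (mul (k + i) u v) w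


variable {U : Type*} [AddCommGroup U] [Module ℂ U]

/-- The bracket `[u,v] = Σ_{n≥0} ((−1)ⁿ/(n+1)!)·D^{n+1}(uₙv)` on a vertex Lie algebra. -/
def brkt (A : VertexLie U) (u v : U) : U :=
  ∑ᶠ n : ℕ, (((-1 : ℂ) ^ n) / (Nat.factorial (n + 1) : ℂ)) • ((A.D ^ (n + 1)) (A.mul n u v))

open Finset Nat

section FiniteSums

variable {M : Type*} [AddCommMonoid M]

theorem finsum_eq_sum_range_of_forall_ge {f : ℕ → M} {N : ℕ} (hf : ∀ n ≥ N, f n = 0) :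
    ∑ᶠ n, f n = ∑ n ∈ range N, f n :=
  finsum_eq_sum_of_support_subset f fun n hn => by
    by_contra h
    exact hn (hf n (by simpa using h))

theorem sum_range_eq_sum_range_add {f : ℕ → M} {t R N : ℕ} (hlow : ∀ m < t, f m = 0)
    (hhigh : ∀ a ≥ R, f (t + a) = 0) (hN : t + R ≤ N) :
    ∑ m ∈ range N, f m = ∑ a ∈ range R, f (t + a) := by
  have hf : ∀ m ≥ t + R, f m = 0 := fun m hm => by
    obtain ⟨a, rfl⟩ := Nat.exists_eq_add_of_le (le_trans (Nat.le_add_right t R) hm)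
    exact hhigh a (by omega)
  rw [eventually_constant_sum hf hN, sum_range_add,
    sum_eq_zero fun m hm => hlow m (mem_range.1 hm), zero_add]

theorem sum_range_sum_range_eq_sum_antidiagonal {f : ℕ → ℕ → M} {N₁ N₂ P : ℕ} (h₁ : P ≤ N₁)
    (h₂ : P ≤ N₂) (hf : ∀ a b, P ≤ a + b → f a b = 0) :
    ∑ a ∈ range N₁, ∑ b ∈ range N₂, f a b = ∑ s ∈ range P, ∑ p ∈ antidiagonal s, f p.1 p.2 := by
  simp_rw [Nat.sum_antidiagonal_eq_sum_range_succ f, sum_range_diag_flip]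
  rw [eventually_constant_sum (fun a ha => sum_eq_zero fun b _ => hf a b (by omega)) h₁]
  refine sum_congr rfl fun a ha => ?_
  exact eventually_constant_sum (fun b hb => hf a b (by omega)) (by omega)

theorem exists_forall_ge_eq_zero_of_forall_ge {F : ℕ → ℕ → M} {Q : ℕ}
    (hF : ∀ b, ∃ N, ∀ a ≥ N, F b a = 0) (hQ : ∀ b ≥ Q, ∀ a, F b a = 0) :
    ∃ P, ∀ b, ∀ a ≥ P, F b a = 0 := by
  choose N hN using hF
  refine ⟨(range Q).sup N, fun b a ha => ?_⟩
  by_cases hb : b < Q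
  · exact hN b a (le_trans (le_sup (mem_range.2 hb)) ha)
  · exact hQ b (not_lt.1 hb) a

/-- The reindexing `a = i + q`, `r = q + b`; the weight `a.choose i` summed over `q + b = r`
is the hockey-stick sum `(i + r + 1).choose (i + 1)`. -/
theorem sum_sum_sum_choose_smul_eq {f : ℕ → ℕ → M} {K W N : ℕ}
    (hK : ∀ i ≥ K, ∀ r, f i r = 0) (hW : ∀ i, ∀ r ≥ W, f i r = 0) (hN : K + W ≤ N) :
    ∑ a ∈ range N, ∑ b ∈ range N, ∑ i ∈ range (a + 1), a.choose i • f i (a + b - i) =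
      ∑ i ∈ range K, ∑ r ∈ range W, (i + r + 1).choose (i + 1) • f i r := by
  have hext : ∀ a ∈ range N, ∀ b, ∑ i ∈ range (a + 1), a.choose i • f i (a + b - i) =
      ∑ i ∈ range N, a.choose i • f i (a + b - i) := fun a ha b =>
    (eventually_constant_sum (fun i hi => by simp [Nat.choose_eq_zero_of_lt (by omega : a < i)])
      (by simpa using ha)).symm
  rw [sum_congr rfl fun a ha => sum_congr rfl fun b _ => hext a ha b]
  rw [sum_congr rfl fun a _ => sum_comm, sum_comm,
    eventually_constant_sum (fun i hi => by simp [hK i hi]) (by omega : K ≤ N)]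
  refine sum_congr rfl fun i hi => ?_
  have hiK : i < K := mem_range.1 hi
  rw [sum_range_eq_sum_range_add (t := i) (R := W)
      (fun a ha => by simp [Nat.choose_eq_zero_of_lt ha])
      (fun q hq => sum_eq_zero fun b _ => by rw [hW i _ (by omega), smul_zero]) (by omega),
    sum_comm, sum_range_sum_range_eq_sum_antidiagonal (by omega) le_rfl
      (fun b q hbq => by rw [hW i _ (by omega), smul_zero])]
  refine sum_congr rfl fun r _ => ?_
  rw [← sum_antidiagonal_choose_add i r, sum_smul]
  refine sum_congr rfl fun p hp => ?_
  rw [HasAntidiagonal.mem_antidiagonal] at hp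
  rw [show i + p.2 + p.1 - i = r by omega]

end FiniteSums

section Coefficients

variable {K : Type*} [Field K] [CharZero K]

/-- The beta integral `∫₀¹ xᵃ (1 - x)ⁿ dx`, computed in two ways. -/
theorem sum_range_choose_mul_neg_one_pow_div (a n : ℕ) :
    ∑ i ∈ range (n + 1), (n.choose i : K) * ((-1) ^ i / (a + i + 1)) =
      a ! * n ! / (a + n + 1)! := by
  induction n generalizing a with
  | zero =>
    have ha : (a ! : K) ≠ 0 := Nat.cast_ne_zero.2 (factorial_ne_zero a)
    rw [sum_range_one, add_zero, factorial_succ]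
    push_cast
    field_simp
    simp
  | succ n ih =>
    have hshift : ∑ i ∈ range (n + 1), (n.choose i : K) * ((-1) ^ (i + 1) / (a + (i + 1 : ℕ) + 1))
        = -∑ i ∈ range (n + 1), (n.choose i : K) * ((-1) ^ i / ((a + 1 : ℕ) + i + 1)) := by
      rw [← sum_neg_distrib]
      refine sum_congr rfl fun i _ => ?_
      push_cast
      ring
    have hfac : ((a + n + 1)! : K) ≠ 0 := Nat.cast_ne_zero.2 (factorial_ne_zero _)
    have hsucc : ((a + n + 1 : ℕ) : K) + 1 ≠ 0 := Nat.cast_add_one_ne_zero _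
    push_cast at hsucc
    rw [sum_choose_succ_mul (fun i _ => (-1 : K) ^ i / (a + i + 1)) n, hshift, ih, ih,
      show a + 1 + n + 1 = a + n + 1 + 1 by ring, show a + (n + 1) + 1 = a + n + 1 + 1 by ring,
      factorial_succ (a + n + 1), factorial_succ a, factorial_succ n]
    push_cast
    field_simp
    ring

theorem descFactorial_div_factorial_succ (n r : ℕ) :
    ((n + r).descFactorial n : K) / (n + r + 1)! = 1 / (r ! * (n + r + 1)) := by
  have h := factorial_mul_descFactorial (Nat.le_add_right n r)
  rw [Nat.add_sub_cancel_left] at h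
  have hr : (r ! : K) ≠ 0 := Nat.cast_ne_zero.2 (factorial_ne_zero r)
  rw [factorial_succ, ← h]
  push_cast
  field_simp

theorem sum_antidiagonal_neg_one_pow_div_factorial_mul_factorial (s : ℕ) :
    ∑ p ∈ antidiagonal s, (-1 : K) ^ p.1 / ((p.1 + 1)! * p.2 !) = 1 / (s + 1)! := by
  have hs : (s ! : K) ≠ 0 := Nat.cast_ne_zero.2 (factorial_ne_zero s)
  have hterm : ∀ i ∈ range (s + 1), (-1 : K) ^ i / ((i + 1)! * (s - i)!) =
      1 / s ! * ((s.choose i : K) * ((-1) ^ i / ((0 : ℕ) + i + 1))) := fun i hi => by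
    have hi' : (i ! : K) ≠ 0 := Nat.cast_ne_zero.2 (factorial_ne_zero i)
    have hsi : ((s - i)! : K) ≠ 0 := Nat.cast_ne_zero.2 (factorial_ne_zero (s - i))
    rw [cast_choose K (Nat.lt_succ_iff.1 (mem_range.1 hi)), factorial_succ]
    push_cast
    field_simp
    ring
  rw [Nat.sum_antidiagonal_eq_sum_range_succ (fun i j => (-1 : K) ^ i / ((i + 1)! * j !)) s,
    sum_congr rfl hterm, ← mul_sum, sum_range_choose_mul_neg_one_pow_div, zero_add,
    factorial_zero, Nat.cast_one, one_mul]
  field_simp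

theorem sum_antidiagonal_choose_mul_descFactorial_mul (a k : ℕ) :
    ∑ p ∈ antidiagonal k, ((k.choose p.1 * (p.1 + a).descFactorial p.1 : ℕ) : K) *
      ((-1) ^ (p.1 + a) / (p.1 + a + 1)!) = (-1) ^ a * k ! / (a + k + 1)! := by
  have ha : (a ! : K) ≠ 0 := Nat.cast_ne_zero.2 (factorial_ne_zero a)
  have hterm : ∀ i ∈ range (k + 1),
      ((k.choose i * (i + a).descFactorial i : ℕ) : K) * ((-1) ^ (i + a) / (i + a + 1)!) =
        (-1) ^ a / a ! * ((k.choose i : K) * ((-1) ^ i / (a + i + 1))) :=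
    fun i _ => by
      have h := descFactorial_div_factorial_succ (K := K) i a
      have hai : (a : K) + i + 1 ≠ 0 := by exact_mod_cast Nat.succ_ne_zero (a + i)
      push_cast at h ⊢
      rw [show (i : K) + a + 1 = a + i + 1 by ring] at h
      rw [show (k.choose i : K) * (i + a).descFactorial i * ((-1) ^ (i + a) / (i + a + 1)!) =
        k.choose i * (-1) ^ (i + a) * ((i + a).descFactorial i / (i + a + 1)!) by ring, h]
      field_simp
      ring
  simp only [Nat.sum_antidiagonal_eq_sum_range_succ_mk]
  rw [sum_congr rfl hterm, ← mul_sum, sum_range_choose_mul_neg_one_pow_div]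
  field_simp

end Coefficients

theorem mul_pow_eq_sum_antidiagonal {R : Type*} [Semiring R] {d : R} {ℓ : ℕ → R}
    (h : ∀ m, ℓ m * d = d * ℓ m + m • ℓ (m - 1)) (m k : ℕ) :
    ℓ m * d ^ k =
      ∑ p ∈ antidiagonal k, k.choose p.1 • m.descFactorial p.1 • (d ^ p.2 * ℓ (m - p.1)) := by
  induction k with
  | zero => simp
  | succ k ih =>
    rw [sum_antidiagonal_choose_succ_nsmul (fun j i => m.descFactorial j • (d ^ i * ℓ (m - j))) k,
      pow_succ, ← mul_assoc, ih, sum_mul]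
    simp only [smul_mul_assoc, mul_assoc, h, mul_add, smul_add, sum_add_distrib]
    congr 1
    · simp only [← mul_assoc, ← pow_succ]
    · refine sum_congr rfl fun p hp => ?_
      rw [choose_symm_of_eq_add (HasAntidiagonal.mem_antidiagonal.1 hp).symm, mul_smul_comm,
        smul_smul (m.descFactorial p.1), descFactorial_succ, mul_comm, Nat.sub_sub]

namespace VertexLie

variable (A : VertexLie U)

theorem mul_D_left (m : ℕ) (y w : U) : A.mul m (A.D y) w = -((m : ℂ) • A.mul (m - 1) y w) := by
  cases m with
  | zero => simp [A.dLeftZero]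
  | succ n => rw [A.dLeft, neg_smul]; push_cast; rfl

theorem mul_D_pow_left (p m : ℕ) (y w : U) :
    A.mul m ((A.D ^ p) y) w = ((-1 : ℂ) ^ p * m.descFactorial p) • A.mul (m - p) y w := by
  induction p generalizing y with
  | zero => simp
  | succ p ih =>
    rw [pow_succ, Module.End.mul_apply, ih, mul_D_left, smul_neg, smul_smul, descFactorial_succ,
      Nat.sub_sub, ← neg_smul]
    push_cast
    congr 1
    ring

theorem mul_comp_D (m : ℕ) (u : U) : A.mul m u * A.D = A.D * A.mul m u + m • A.mul (m - 1) u := by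
  ext x
  have h := A.leibniz m u x
  rw [mul_D_left] at h
  simp only [Module.End.mul_apply, LinearMap.add_apply, LinearMap.smul_apply, h,
    ← Nat.cast_smul_eq_nsmul ℂ]
  abel

theorem mul_D_pow_right (m k : ℕ) (u x : U) :
    A.mul m u ((A.D ^ k) x) = ∑ p ∈ antidiagonal k,
      ((k.choose p.1 * m.descFactorial p.1 : ℕ) : ℂ) • (A.D ^ p.2) (A.mul (m - p.1) u x) := by
  have h := LinearMap.congr_fun (mul_pow_eq_sum_antidiagonal (A.mul_comp_D · u) m k) x
  simpa only [Module.End.mul_apply, LinearMap.sum_apply, LinearMap.smul_apply,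
    smul_smul, Nat.cast_smul_eq_nsmul] using h

theorem mul_mul_sub_mul_mul (m n : ℕ) (u v w : U) :
    A.mul m u (A.mul n v w) - A.mul n v (A.mul m u w) =
      ∑ i ∈ range (m + 1), (m.choose i : ℂ) • A.mul (m + n - i) (A.mul i u v) w := by
  have h := A.jacobi 0 m n u v w
  rw [finsum_eq_single _ 0 fun i hi => by simp [Nat.choose_eq_zero_of_lt (pos_of_ne_zero hi)],
    finsum_eq_sum_range_of_forall_ge (N := m + 1) fun i hi => by
      simp [Nat.choose_eq_zero_of_lt (show m < i by omega)]] at h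
  simpa using h

theorem D_pow_D_pow (a b : ℕ) (x : U) : (A.D ^ a) ((A.D ^ b) x) = (A.D ^ (a + b)) x := by
  rw [pow_add, Module.End.mul_apply]

theorem brkt_eq_sum_range {u v : U} {N : ℕ} (h : ∀ n ≥ N, A.mul n u v = 0) :
    brkt A u v = ∑ n ∈ range N, ((-1 : ℂ) ^ n / (n + 1)!) • (A.D ^ (n + 1)) (A.mul n u v) :=
  finsum_eq_sum_range_of_forall_ge fun n hn => by simp [h n hn]

theorem hasFiniteSupport_brkt_summand (u v : U) :
    (fun n => ((-1 : ℂ) ^ n / (n + 1)!) • (A.D ^ (n + 1)) (A.mul n u v)).HasFiniteSupport := by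
  obtain ⟨N, hN⟩ := A.trunc u v
  refine (Set.finite_Iio N).subset fun n hn => ?_
  by_contra h
  exact hn (by simp [hN n (not_lt.1 h)])

def brktₗ : U →ₗ[ℂ] U →ₗ[ℂ] U :=
  LinearMap.mk₂ ℂ (brkt A)
    (fun u₁ u₂ v => by
      simp only [brkt, map_add, LinearMap.add_apply, smul_add]
      exact finsum_add_distrib (A.hasFiniteSupport_brkt_summand _ _)
        (A.hasFiniteSupport_brkt_summand _ _))
    (fun c u v => by
      simp only [brkt, map_smul, LinearMap.smul_apply, smul_comm _ c]
      exact (smul_finsum' c (A.hasFiniteSupport_brkt_summand u v)).symm)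
    (fun u v₁ v₂ => by
      simp only [brkt, map_add, smul_add]
      exact finsum_add_distrib (A.hasFiniteSupport_brkt_summand _ _)
        (A.hasFiniteSupport_brkt_summand _ _))
    (fun c u v => by
      simp only [brkt, map_smul, smul_comm _ c]
      exact (smul_finsum' c (A.hasFiniteSupport_brkt_summand u v)).symm)

@[simp]
theorem brktₗ_apply (u v : U) : A.brktₗ u v = brkt A u v := rfl

theorem brkt_swap (u v : U) : brkt A v u = -brkt A u v := by
  obtain ⟨N₁, h₁⟩ := A.trunc u v
  obtain ⟨N₂, h₂⟩ := A.trunc v u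
  have huv : ∀ n ≥ N₁ + N₂, A.mul n u v = 0 := fun n hn => h₁ n (by omega)
  have hvu : ∀ n ≥ N₁ + N₂, A.mul n v u = 0 := fun n hn => h₂ n (by omega)
  have hskew : ∀ n, A.mul n v u = -∑ k ∈ range (N₁ + N₂),
      ((-1 : ℂ) ^ (n + k) / k !) • (A.D ^ k) (A.mul (n + k) u v) := fun n => by
    rw [A.skew, finsum_eq_sum_range_of_forall_ge (N := N₁ + N₂) fun k hk => by
      simp [huv (n + k) (by omega)]]
  rw [A.brkt_eq_sum_range hvu, A.brkt_eq_sum_range huv]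
  simp only [hskew, map_neg, map_sum, map_smul, smul_neg, smul_sum, smul_smul, D_pow_D_pow,
    sum_neg_distrib, neg_inj]
  rw [sum_range_sum_range_eq_sum_antidiagonal le_rfl le_rfl fun n k hnk => by simp [huv _ hnk]]
  refine sum_congr rfl fun s _ => ?_
  have hterm : ∀ p ∈ antidiagonal s,
      ((-1 : ℂ) ^ p.1 / (p.1 + 1)! * ((-1) ^ (p.1 + p.2) / p.2 !)) •
        (A.D ^ (p.1 + 1 + p.2)) (A.mul (p.1 + p.2) u v) =
      ((-1 : ℂ) ^ s * ((-1) ^ p.1 / ((p.1 + 1)! * p.2 !))) • (A.D ^ (s + 1)) (A.mul s u v) :=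
    fun p hp => by
      rw [HasAntidiagonal.mem_antidiagonal] at hp
      rw [show p.1 + 1 + p.2 = s + 1 by omega, hp]
      congr 1
      ring
  rw [sum_congr rfl hterm, ← sum_smul, ← mul_sum,
    sum_antidiagonal_neg_one_pow_div_factorial_mul_factorial, mul_one_div]

theorem brkt_D_pow_right {u x : U} {N : ℕ} (h : ∀ a ≥ N, A.mul a u x = 0) (k : ℕ) :
    brkt A u ((A.D ^ k) x) = ∑ a ∈ range N,
      ((-1 : ℂ) ^ a * k ! / (a + k + 1)!) • (A.D ^ (a + k + 1)) (A.mul a u x) := by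
  have hvan : ∀ m ≥ N + k, A.mul m u ((A.D ^ k) x) = 0 := fun m hm => by
    rw [mul_D_pow_right]
    refine sum_eq_zero fun p hp => ?_
    rw [HasAntidiagonal.mem_antidiagonal] at hp
    rw [h _ (by omega), map_zero, smul_zero]
  rw [A.brkt_eq_sum_range hvan]
  simp only [mul_D_pow_right, map_sum, map_smul, smul_sum, smul_smul, D_pow_D_pow]
  rw [sum_comm]
  have hshift : ∀ p ∈ antidiagonal k,
      ∑ m ∈ range (N + k), ((-1 : ℂ) ^ m / (m + 1)! *
          ((k.choose p.1 * m.descFactorial p.1 : ℕ) : ℂ)) • (A.D ^ (m + 1 + p.2)) (A.mul (m - p.1) u x) =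
        ∑ a ∈ range N, (((k.choose p.1 * (p.1 + a).descFactorial p.1 : ℕ) : ℂ) *
          ((-1) ^ (p.1 + a) / (p.1 + a + 1)!)) • (A.D ^ (a + k + 1)) (A.mul a u x) :=
    fun p hp => by
    rw [HasAntidiagonal.mem_antidiagonal] at hp
    rw [sum_range_eq_sum_range_add (t := p.1) (R := N)
      (fun m hm => by simp [descFactorial_eq_zero_iff_lt.2 hm])
      (fun a ha => by simp [h a ha]) (by omega)]
    refine sum_congr rfl fun a _ => ?_
    rw [Nat.add_sub_cancel_left, show p.1 + a + 1 + p.2 = a + k + 1 by omega, mul_comm]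
  rw [sum_congr rfl hshift, sum_comm]
  refine sum_congr rfl fun a _ => ?_
  rw [← sum_smul, sum_antidiagonal_choose_mul_descFactorial_mul]


theorem brkt_D_pow_left {y w : U} {N : ℕ} (h : ∀ r ≥ N, A.mul r y w = 0) (p : ℕ) :
    brkt A ((A.D ^ p) y) w = ∑ r ∈ range N,
      ((-1 : ℂ) ^ r / (r ! * (p + r + 1))) • (A.D ^ (p + r + 1)) (A.mul r y w) := by
  have hvan : ∀ m ≥ p + N, A.mul m ((A.D ^ p) y) w = 0 := fun m hm => by
    rw [mul_D_pow_left, h _ (by omega), smul_zero]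
  rw [A.brkt_eq_sum_range hvan, sum_range_eq_sum_range_add (t := p) (R := N)
    (fun m hm => by simp [mul_D_pow_left, descFactorial_eq_zero_iff_lt.2 hm])
    (fun r hr => by simp [mul_D_pow_left, h r hr]) le_rfl]
  refine sum_congr rfl fun r _ => ?_
  have hcoeff := descFactorial_div_factorial_succ (K := ℂ) p r
  rw [mul_D_pow_left, Nat.add_sub_cancel_left, map_smul, smul_smul]
  congr 1
  rw [show ((-1 : ℂ) ^ (p + r) / (p + r + 1)! * ((-1) ^ p * ((p + r).descFactorial p : ℕ))) =
      ((-1) ^ p) ^ 2 * (-1) ^ r * (((p + r).descFactorial p : ℕ) / (p + r + 1)!) by ring,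
    hcoeff, ← pow_mul, pow_mul', neg_one_sq, one_pow, one_mul, mul_one_div]

theorem brkt_brkt_eq_sum {u v w : U} {N : ℕ} (hvw : ∀ b ≥ N, A.mul b v w = 0)
    (hu : ∀ b, ∀ a ≥ N, A.mul a u (A.mul b v w) = 0) :
    brkt A u (brkt A v w) = ∑ a ∈ range N, ∑ b ∈ range N,
      ((-1 : ℂ) ^ (a + b) / (a + b + 2)!) • (A.D ^ (a + b + 2)) (A.mul a u (A.mul b v w)) := by
  rw [A.brkt_eq_sum_range hvw, ← brktₗ_apply, map_sum]
  simp only [map_smul, brktₗ_apply, A.brkt_D_pow_right (hu _), smul_sum, smul_smul]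
  rw [sum_comm]
  refine sum_congr rfl fun a _ => sum_congr rfl fun b _ => ?_
  have hb : ((b + 1)! : ℂ) ≠ 0 := Nat.cast_ne_zero.2 (factorial_ne_zero _)
  rw [show a + (b + 1) + 1 = a + b + 2 by omega]
  congr 1
  rw [pow_add]
  field_simp

def jacobiSummand (u v w : U) (i r : ℕ) : U :=
  ((-1 : ℂ) ^ (i + r) / (i + r + 2)!) • (A.D ^ (i + r + 2)) (A.mul r (A.mul i u v) w)

theorem brkt_brkt_left_eq_sum {u v w : U} {K W : ℕ} (huv : ∀ i ≥ K, A.mul i u v = 0)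
    (hw : ∀ i, ∀ r ≥ W, A.mul r (A.mul i u v) w = 0) :
    brkt A (brkt A u v) w = ∑ i ∈ range K, ∑ r ∈ range W,
      (i + r + 1).choose (i + 1) • A.jacobiSummand u v w i r := by
  rw [A.brkt_eq_sum_range huv, ← brktₗ_apply, map_sum, LinearMap.sum_apply]
  simp only [map_smul, LinearMap.smul_apply, brktₗ_apply, A.brkt_D_pow_left (hw _), smul_sum,
    smul_smul, jacobiSummand, ← Nat.cast_smul_eq_nsmul ℂ]
  refine sum_congr rfl fun i _ => sum_congr rfl fun r _ => ?_
  have hi : ((i + 1)! : ℂ) ≠ 0 := Nat.cast_ne_zero.2 (factorial_ne_zero _)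
  have hr : (r ! : ℂ) ≠ 0 := Nat.cast_ne_zero.2 (factorial_ne_zero _)
  have hir : ((i + 1 + r)! : ℂ) ≠ 0 := Nat.cast_ne_zero.2 (factorial_ne_zero _)
  have hsucc : ((i + 1 + r : ℕ) : ℂ) + 1 ≠ 0 := Nat.cast_add_one_ne_zero _
  rw [show i + 1 + r + 1 = i + r + 2 by omega, show i + r + 1 = i + 1 + r by omega,
    Nat.cast_add_choose, show i + r + 2 = i + 1 + r + 1 by omega, factorial_succ (i + 1 + r)]
  congr 1
  push_cast at hsucc ⊢
  rw [pow_add]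
  field_simp

theorem brkt_brkt_sub_brkt_brkt_eq_sum {u v w : U} {N : ℕ} (hvw : ∀ b ≥ N, A.mul b v w = 0)
    (huw : ∀ a ≥ N, A.mul a u w = 0) (hu : ∀ b, ∀ a ≥ N, A.mul a u (A.mul b v w) = 0)
    (hv : ∀ a, ∀ b ≥ N, A.mul b v (A.mul a u w) = 0) :
    brkt A u (brkt A v w) - brkt A v (brkt A u w) = ∑ a ∈ range N, ∑ b ∈ range N,
      ∑ i ∈ range (a + 1), a.choose i • A.jacobiSummand u v w i (a + b - i) := by
  rw [A.brkt_brkt_eq_sum huw hv, sum_comm, A.brkt_brkt_eq_sum hvw hu, ← sum_sub_distrib]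
  refine sum_congr rfl fun a _ => ?_
  rw [← sum_sub_distrib]
  refine sum_congr rfl fun b _ => ?_
  rw [add_comm b a, ← smul_sub, ← map_sub, mul_mul_sub_mul_mul, map_sum, smul_sum]
  refine sum_congr rfl fun i hi => ?_
  rw [jacobiSummand, show i + (a + b - i) = a + b by have := mem_range.1 hi; omega, map_smul,
    smul_comm, Nat.cast_smul_eq_nsmul]

theorem brkt_jacobi (u v w : U) :
    brkt A u (brkt A v w) - brkt A v (brkt A u w) = brkt A (brkt A u v) w := by
  obtain ⟨K, huv⟩ := A.trunc u v
  obtain ⟨W, hw⟩ := exists_forall_ge_eq_zero_of_forall_ge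
    (F := fun i r => A.mul r (A.mul i u v) w) (Q := K) (fun i => A.trunc _ w) fun i hi r => by
      simp [huv i hi]
  obtain ⟨Nvw, hvw⟩ := A.trunc v w
  obtain ⟨Nuw, huw⟩ := A.trunc u w
  obtain ⟨Nu, hu⟩ := exists_forall_ge_eq_zero_of_forall_ge
    (F := fun b a => A.mul a u (A.mul b v w)) (Q := Nvw) (fun b => A.trunc u _) fun b hb a => by
      simp [hvw b hb]
  obtain ⟨Nv, hv⟩ := exists_forall_ge_eq_zero_of_forall_ge
    (F := fun a b => A.mul b v (A.mul a u w)) (Q := Nuw) (fun a => A.trunc v _) fun a ha b => by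
      simp [huw a ha]
  rw [A.brkt_brkt_sub_brkt_brkt_eq_sum (N := K + W + Nvw + Nuw + Nu + Nv)
      (fun b hb => hvw b (by omega)) (fun a ha => huw a (by omega))
      (fun b a ha => hu b a (by omega)) (fun a b hb => hv a b (by omega)),
    A.brkt_brkt_left_eq_sum huv hw]
  exact sum_sum_sum_choose_smul_eq (fun i hi r => by simp [jacobiSummand, huv i hi])
    (fun i r hr => by simp [jacobiSummand, hw i r hr]) (by omega)

end VertexLie

/-- the bracket `[u,v] = Σ_{n≥0} ((−1)ⁿ/(n+1)!)·D^{n+1}(uₙv)` makes a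
vertex Lie algebra `U` into a Lie algebra: it is skew symmetric and satisfies the
Jacobi identity `[u,[v,w]] − [v,[u,w]] = [[u,v],w]`. -/
theorem stmt6 (A : VertexLie U) :
    (∀ u v : U, brkt A v u = -brkt A u v) ∧
    (∀ u v w : U,
      brkt A u (brkt A v w) - brkt A v (brkt A u w) = brkt A (brkt A u v) w) :=
  ⟨A.brkt_swap, A.brkt_jacobi⟩

end
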